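/- (Lemma 2) Let G be a DAG, T_s a DFS arborescence rooted at s, s1 a child of s, u, v ∈ T_{s1}, and z = LCA_{T_s}(u,v) with z ≠ u and z ≠ v. Then s ∈ J(u,v) if and only if s ∈ J(z,u) or s ∈ J(z,v). -/

import Mathlib

variable {V : Type*}

/-- A directed graph (given as a relation) is acyclic: no nontrivial closed directed walk. -/
def Acyclic (G : V → V → Prop) : Prop := Irreflexive (Relation.TransGen G)

/-- `l` is a directed path in `G` from `a` to `b`: consecutive vertices are joined by arcs
of `G` and no vertex is repeated. -/
def IsDipath (G : V → V → Prop) (l : List V) (a b : V) : Prop :=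
  l.Chain' G ∧ l.head? = some a ∧ l.getLast? = some b ∧ l.Nodup

/-- The internal vertices of a path (all vertices except the two endpoints). -/
def internalVerts (l : List V) : List V := l.tail.dropLast

/-- `s` is a junction of the pair of distinct vertices `u, v` in `G`: there are directed
paths from `s` to `u` and from `s` to `v` sharing no vertex other than `s`. -/
def IsJunction (G : V → V → Prop) (s u v : V) : Prop :=
  u ≠ v ∧ ∃ p q : List V, IsDipath G p s u ∧ IsDipath G q s v ∧
    ∀ x, x ∈ p → x ∈ q → x = s

/-- `z` is the lowest common ancestor of `u` and `v` in the tree (arborescence) `T`: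
a common ancestor that is a descendant of every common ancestor. -/
def IsTreeLCA (T : V → V → Prop) (u v z : V) : Prop :=
  Relation.ReflTransGen T z u ∧ Relation.ReflTransGen T z v ∧
    ∀ y, Relation.ReflTransGen T y u → Relation.ReflTransGen T y v →
      Relation.ReflTransGen T y z

/-- `s` is a lowest common ancestor of `u, v` in the DAG `G`: a junction of `u, v` such
that there is no directed path from `s` to any other junction of `u, v`. -/
def IsLCA (G : V → V → Prop) (s u v : V) : Prop :=
  IsJunction G s u v ∧
    ∀ s', s' ≠ s → IsJunction G s' u v → ¬ Relation.TransGen G s s'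

/-- A DFS arborescence of `G` rooted at `s`, spanning all descendants of `s`, together
with its post-order numbering and the standard structural properties of depth-first
search: tree arcs are graph arcs, the root has no parent, parents are unique, every
`G`-descendant of `s` is in the tree, `post` is injective on the tree, `post` strictly
decreases from a vertex to its proper tree descendants, the post-order numbers of each
subtree form a contiguous interval, and every graph arc between tree vertices is a
tree/forward arc, a back arc, or a (post-order decreasing) cross arc. -/
structure DFSArborescence (G : V → V → Prop) (s : V) where
  T : V → V → Prop
  post : V → ℕ
  sub : ∀ ⦃a b⦄, T a b → G a b
  root_no_parent : ∀ a, ¬ T a s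
  unique_parent : ∀ ⦃a b c⦄, T a b → T c b → a = c
  verts_reach : ∀ ⦃a b⦄, T a b → Relation.ReflTransGen T s a
  spans : ∀ ⦃v⦄, Relation.ReflTransGen G s v → Relation.ReflTransGen T s v
  post_inj : ∀ ⦃u v⦄, Relation.ReflTransGen T s u → Relation.ReflTransGen T s v →
      post u = post v → u = v
  post_desc : ∀ ⦃u v⦄, Relation.ReflTransGen T s u → Relation.TransGen T u v →
      post v < post u
  post_contig : ∀ ⦃u v x⦄, Relation.ReflTransGen T s u → Relation.ReflTransGen T u v →
      Relation.ReflTransGen T s x → post v ≤ post x → post x ≤ post u →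
      Relation.ReflTransGen T u x
  arc_classify : ∀ ⦃u v⦄, G u v → Relation.ReflTransGen T s u →
      Relation.ReflTransGen T s v →
      Relation.ReflTransGen T u v ∨ Relation.ReflTransGen T v u ∨ post v < post u

/-
Forward direction: walk back along a path from `s` to `z` to its last vertex `w` on one of two
internally disjoint paths from `s` to `u` and to `v`. Rerouting that path through `w` to `z`
yields a junction of `z` with the other endpoint.

Backward direction: let `p : s → z` and `q : s → v` be internally disjoint, and `d`, `e` the
children of `z` towards `u` and `v`. Their subtrees are disjoint and lie strictly below `z`, so
acyclicity keeps them off `p`. If the tree path from `d` to `u` misses `q`, extend `p` by it.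
Otherwise cut `q` at a common vertex `w` and follow the tree path on to `u`, while `p` is extended
by the tree path to `v`. Post-order numbers decrease along arcs and each subtree is an interval of
them, so a subtree is convex for reachability: the part of `q` before `w` cannot meet the subtree
of `e`.
-/

open Relation

theorem List.exists_eq_append_cons_forall_not_of_exists {α : Type*} {p : α → Prop}
    {l : List α} (h : ∃ x ∈ l, p x) :
    ∃ l₁ w l₂, l = l₁ ++ w :: l₂ ∧ p w ∧ ∀ x ∈ l₂, ¬ p x := by
  classical
  obtain ⟨hw, as, bs, hrev, has⟩ := find?_eq_some_iff_append.1
    (Option.get_mem (find?_isSome.2 (by simpa using h) : (l.reverse.find? (p ·)).isSome))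
  exact ⟨bs.reverse, _, as.reverse, by simpa using congrArg reverse hrev, by simpa using hw,
    fun x hx => by simpa using has x (mem_reverse.1 hx)⟩

section

variable {G : V → V → Prop}

theorem Acyclic.nodup_of_isChain (hG : Acyclic G) {l : List V} (h : l.IsChain G) :
    l.Nodup := by
  refine (h.imp fun _ _ => TransGen.single).pairwise.imp ?_
  rintro x _ hxx rfl
  exact hG x hxx

namespace IsDipath

variable {l p₁ p₂ q₁ q₂ : List V} {a b c d w x : V}

theorem head_mem (hl : IsDipath G l a b) : a ∈ l :=
  List.mem_of_mem_head? hl.2.1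

theorem reflTransGen_of_mem (hl : IsDipath G l a b) (hx : x ∈ l) : ReflTransGen G x b := by
  have hne : l ≠ [] := List.ne_nil_of_mem hx
  have hb : l.getLast hne = b := Option.some_injective _ <|
    (List.getLast?_eq_some_getLast hne).symm.trans hl.2.2.1
  exact (hl.1 : l.IsChain G).backwards_induction (ReflTransGen G · b) l
    (fun _ _ hyz hz => hz.head hyz) (fun _ => hb ▸ .refl) x hx

theorem of_append_cons (hp : IsDipath G (p₁ ++ w :: p₂) a b) :
    IsDipath G (p₁ ++ [w]) a w := by
  have hpre : p₁ ++ [w] <+: p₁ ++ w :: p₂ := ⟨p₂, by simp⟩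
  refine ⟨(hp.1 : List.IsChain G _).prefix hpre, ?_, by simp, hp.2.2.2.sublist hpre.sublist⟩
  cases p₁ <;> simpa using hp.2.1

theorem notMem_of_transGen (hG : Acyclic G) (hl : IsDipath G l a b) (h : TransGen G b x) :
    x ∉ l :=
  fun hx => hG x (h.trans_right (hl.reflTransGen_of_mem hx))

variable (hG : Acyclic G)
include hG

theorem of_isChain (h : l.IsChain G) (ha : l.head? = some a) (hb : l.getLast? = some b) :
    IsDipath G l a b :=
  ⟨h, ha, hb, hG.nodup_of_isChain h⟩

theorem splice (hp : IsDipath G (p₁ ++ w :: p₂) a b) (hq : IsDipath G (q₁ ++ w :: q₂) c d) :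
    IsDipath G (p₁ ++ w :: q₂) a d := by
  refine .of_isChain hG (List.isChain_split.2 ⟨(List.isChain_split.1 hp.1).1,
    (List.isChain_split.1 hq.1).2⟩) ?_ ?_
  · cases p₁ <;> simpa using hp.2.1
  · have := hq.2.2.1
    cases q₂ <;> simp_all [List.getLast?_append]

theorem cons (hab : G a b) (hl : IsDipath G l b c) : IsDipath G (a :: l) a c := by
  obtain ⟨l', rfl⟩ := List.head?_eq_some_iff.1 hl.2.1
  exact .of_isChain hG (.cons_cons hab hl.1) rfl (by simpa using hl.2.2.1)

end IsDipath

theorem Acyclic.exists_isDipath (hG : Acyclic G) {R : V → V → Prop} {a b : V} (hRG : R ≤ G)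
    (h : ReflTransGen R a b) : ∃ l, IsDipath G l a b ∧ ∀ x ∈ l, ReflTransGen R a x := by
  obtain ⟨l, hl, hlast⟩ := List.exists_isChain_cons_of_relationReflTransGen h
  refine ⟨a :: l, .of_isChain hG (hl.imp hRG) rfl ?_,
    hl.induction _ _ (fun _ _ hxy hx => hx.tail hxy) fun _ => .refl⟩
  rw [List.getLast?_eq_some_getLast (List.cons_ne_nil _ _), hlast]

namespace IsJunction

variable {s a b z : V}

theorem symm (h : IsJunction G s a b) : IsJunction G s b a := by
  obtain ⟨hab, p, q, hp, hq, hpq⟩ := h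
  exact ⟨hab.symm, q, p, hq, hp, fun x hxq hxp => hpq x hxp hxq⟩

variable (hG : Acyclic G)
include hG

theorem of_splice {p₁ p₂ c₁ c₂ q : List V} {s' w : V} (hzb : z ≠ b)
    (hp : IsDipath G (p₁ ++ w :: p₂) s a) (hq : IsDipath G q s b)
    (hpq : ∀ x, x ∈ p₁ ++ w :: p₂ → x ∈ q → x = s)
    (hc : IsDipath G (c₁ ++ w :: c₂) s' z) (hc₂ : ∀ x ∈ c₂, x ∉ q) :
    IsJunction G s z b := by
  refine ⟨hzb, _, q, hp.splice hG hc, hq, fun x hx hxq => ?_⟩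
  obtain hx | rfl | hx : x ∈ p₁ ∨ x = w ∨ x ∈ c₂ := by simpa using hx
  · exact hpq x (by simp [hx]) hxq
  · exact hpq x (by simp) hxq
  · exact absurd hxq (hc₂ x hx)

theorem or_of_reflTransGen (hJ : IsJunction G s a b) (hz : ReflTransGen G s z) (hza : z ≠ a)
    (hzb : z ≠ b) : IsJunction G s z a ∨ IsJunction G s z b := by
  obtain ⟨-, p, q, hp, hq, hpq⟩ := hJ
  obtain ⟨c, hc, -⟩ := hG.exists_isDipath le_rfl hz
  obtain ⟨c₁, w, c₂, rfl, hw, hc₂⟩ := List.exists_eq_append_cons_forall_not_of_exists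
    (p := fun x => x ∈ p ∨ x ∈ q) ⟨s, hc.head_mem, .inl hp.head_mem⟩
  rcases hw with hwp | hwq
  · obtain ⟨p₁, p₂, rfl⟩ := List.append_of_mem hwp
    exact .inr (of_splice hG hzb hp hq hpq hc fun x hx hxq => hc₂ x hx (.inr hxq))
  · obtain ⟨q₁, q₂, rfl⟩ := List.append_of_mem hwq
    exact .inl (of_splice hG hza hq hp (fun x hxq hxp => hpq x hxp hxq) hc
      fun x hx hxp => hc₂ x hx (.inl hxp))

end IsJunction

namespace DFSArborescence

variable {s : V} (A : DFSArborescence G s) {a b d e r u v w x z : V}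

theorem reflTransGen_of_tree (h : ReflTransGen A.T a b) : ReflTransGen G a b :=
  ReflTransGen.mono (fun _ _ h => A.sub h) _ _ h

theorem transGen_of_tree (h : TransGen A.T a b) : TransGen G a b :=
  TransGen.mono (fun _ _ h => A.sub h) _ _ h

variable (hG : Acyclic G)
include hG

theorem post_lt_of_arc (hab : G a b) (ha : ReflTransGen A.T s a) : A.post b < A.post a := by
  have hb := A.spans ((A.reflTransGen_of_tree ha).tail hab)
  have hne : a ≠ b := by rintro rfl; exact hG a (.single hab)
  rcases A.arc_classify hab ha hb with h | h | h
  · exact A.post_desc ha ((reflTransGen_iff_eq_or_transGen.1 h).resolve_left hne.symm)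
  · exact (hG a (.head hab (A.transGen_of_tree
      ((reflTransGen_iff_eq_or_transGen.1 h).resolve_left hne)))).elim
  · exact h

theorem post_le_of_reflTransGen (h : ReflTransGen G a b) (ha : ReflTransGen A.T s a) :
    A.post b ≤ A.post a := by
  induction h with
  | refl => exact le_rfl
  | tail hab hbc ih =>
    have hsb := A.spans ((A.reflTransGen_of_tree ha).trans hab)
    exact (A.post_lt_of_arc hG hbc hsb).le.trans ih

theorem subtree_convex (hr : ReflTransGen A.T s r) (hx : ReflTransGen A.T r x)
    (hv : ReflTransGen A.T r v) (hxw : ReflTransGen G x w) (hwv : ReflTransGen G w v) :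
    ReflTransGen A.T r w := by
  have hsx := hr.trans hx
  have hsw := A.spans ((A.reflTransGen_of_tree hsx).trans hxw)
  exact A.post_contig hr hv hsw (A.post_le_of_reflTransGen hG hwv hsw)
    ((A.post_le_of_reflTransGen hG hxw hsx).trans
      (A.post_le_of_reflTransGen hG (A.reflTransGen_of_tree hx) hr))

theorem not_reflTransGen_of_isTreeLCA (hz : IsTreeLCA A.T u v z) (hzd : A.T z d)
    (hdu : ReflTransGen A.T d u) (hze : A.T z e) (hev : ReflTransGen A.T e v)
    (hdx : ReflTransGen A.T d x) : ¬ ReflTransGen A.T e x := by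
  have hchild : ∀ c, A.T z c → ReflTransGen A.T c u → ReflTransGen A.T c v → False :=
    fun c hzc hcu hcv => hG z (A.transGen_of_tree (.head' hzc (hz.2.2 c hcu hcv)))
  intro hex
  have hunique : Relator.RightUnique (Function.swap A.T) :=
    fun _ _ _ h₁ h₂ => A.unique_parent h₁ h₂
  rcases (reflTransGen_swap.2 hdx).total_of_right_unique hunique (reflTransGen_swap.2 hex)
    with hed | hde
  · exact hchild e hze ((reflTransGen_swap.1 hed).trans hdu) hev
  · exact hchild d hzd hdu ((reflTransGen_swap.1 hde).trans hev)

end DFSArborescence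

theorem IsTreeLCA.symm {T : V → V → Prop} {u v z : V} (h : IsTreeLCA T u v z) :
    IsTreeLCA T v u z :=
  ⟨h.2.1, h.1, fun y hyv hyu => h.2.2 y hyu hyv⟩

theorem IsJunction.of_isTreeLCA (hG : Acyclic G) {s u v z : V} (A : DFSArborescence G s)
    (hz : IsTreeLCA A.T u v z) (huv : u ≠ v) (hzu : z ≠ u) (hzv : z ≠ v)
    (hJ : IsJunction G s z v) : IsJunction G s u v := by
  obtain ⟨-, p, q, hp, hq, hpq⟩ := hJ
  obtain ⟨d, hzd, hdu⟩ := hz.1.cases_head.resolve_left hzu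
  obtain ⟨e, hze, hev⟩ := hz.2.1.cases_head.resolve_left hzv
  obtain ⟨lu, hlu, hluT⟩ := hG.exists_isDipath (fun _ _ h => A.sub h) hdu
  obtain ⟨lv, hlv, hlvT⟩ := hG.exists_isDipath (fun _ _ h => A.sub h) hev
  have hsep : ∀ x, ReflTransGen A.T d x → ¬ ReflTransGen A.T e x :=
    fun _ => A.not_reflTransGen_of_isTreeLCA hG hz hzd hdu hze hev
  have hlu_notMem : ∀ x ∈ lu, x ∉ p := fun x hx =>
    hp.notMem_of_transGen hG (A.transGen_of_tree (.head' hzd (hluT x hx)))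
  obtain ⟨p₁, rfl⟩ := List.getLast?_eq_some_iff.1 hp.2.2.1
  by_cases hmeet : ∀ w ∈ lu, w ∉ q
  · refine ⟨huv, _, q, hp.splice hG (q₁ := []) (hlu.cons hG (A.sub hzd)), hq,
      fun x hxu hxq => ?_⟩
    obtain hxp | hx : x ∈ p₁ ++ [z] ∨ x ∈ lu := by simpa [or_assoc] using hxu
    · exact hpq x hxp hxq
    · exact absurd hxq (hmeet x hx)
  · obtain ⟨w, hwlu, hwq⟩ : ∃ w ∈ lu, w ∈ q := by simpa using hmeet
    obtain ⟨q₁, q₂, rfl⟩ := List.append_of_mem hwq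
    obtain ⟨t₁, t₂, rfl⟩ := List.append_of_mem hwlu
    refine ⟨huv, q₁ ++ w :: t₂, p₁ ++ z :: lv, hq.splice hG hlu,
      hp.splice hG (q₁ := []) (hlv.cons hG (A.sub hze)), fun x hxu hxv => ?_⟩
    obtain hx | hx : x ∈ q₁ ++ [w] ∨ x ∈ t₂ := by simpa [or_assoc] using hxu
    · obtain hxp | hxv : x ∈ p₁ ++ [z] ∨ x ∈ lv := by simpa [or_assoc] using hxv
      · exact hpq x hxp (by simp at hx ⊢; tauto)
      · -- `q` runs from `x` through `w` to `v`, so the subtree of `e` would contain `w`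
        exact absurd (A.subtree_convex hG ((A.verts_reach hzd).tail hze) (hlvT x hxv) hev
          (hq.of_append_cons.reflTransGen_of_mem hx) (hq.reflTransGen_of_mem (by simp)))
          (hsep w (hluT w (by simp)))
    · have hx' : x ∈ t₁ ++ w :: t₂ := by simp [hx]
      obtain hxp | hxv : x ∈ p₁ ++ [z] ∨ x ∈ lv := by simpa [or_assoc] using hxv
      · exact absurd hxp (hlu_notMem x hx')
      · exact absurd (hlvT x hxv) (hsep x (hluT x hx'))

end

theorem stmt7_general (G : V → V → Prop) (hG : Acyclic G) (s : V) (A : DFSArborescence G s)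
    (u v : V)
    (huv : u ≠ v) (z : V) (hz : IsTreeLCA A.T u v z) (hzu : z ≠ u) (hzv : z ≠ v) :
    IsJunction G s u v ↔ IsJunction G s z u ∨ IsJunction G s z v := by
  obtain ⟨d, hzd, -⟩ := hz.1.cases_head.resolve_left hzu
  have hsz : ReflTransGen G s z := A.reflTransGen_of_tree (A.verts_reach hzd)
  refine ⟨fun hJ => hJ.or_of_reflTransGen hG hsz hzu hzv, ?_⟩
  rintro (hJ | hJ)
  · exact (hJ.of_isTreeLCA hG A hz.symm huv.symm hzv hzu).symm
  · exact hJ.of_isTreeLCA hG A hz huv hzu hzv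

/-- Lemma 2: with `z = LCA_{T_s}(u,v)`, `z ≠ u, v`, we have
`s ∈ J(u,v)` iff `s ∈ J(z,u)` or `s ∈ J(z,v)`. -/
theorem stmt7 (G : V → V → Prop) (hG : Acyclic G) (s : V) (A : DFSArborescence G s)
    (s1 : V) (h1 : A.T s s1) (u v : V)
    (hu : Relation.ReflTransGen A.T s1 u) (hv : Relation.ReflTransGen A.T s1 v)
    (huv : u ≠ v) (z : V) (hz : IsTreeLCA A.T u v z) (hzu : z ≠ u) (hzv : z ≠ v) :
    IsJunction G s u v ↔ IsJunction G s z u ∨ IsJunction G s z v :=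
  stmt7_general G hG s A u v huv z hz hzu hzv
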